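/- arXiv:2003.00886 — 2 statements merged into one kernel-verified Lean document; each statement's English description precedes it below -/
import Mathlib

section
/- If (y - w̄)/(y - (1-δ)(w̄-w̲)) < c_ε < (y - w̲)/y, where w̄ = k_u - v and w̲ = k_d - v, and w̲ ≥ 0, then x̄ = (δy + (1-δ)w̲)/(1 - (1-δ)c_ε) solves the clearing fixed point equation x̄ = δ·min{(k_u + c_ε x̄ - v)⁺, y} + (1-δ)·min{(k_d + c_ε x̄ - v)⁺, y}, with the down-shock branch defaulting (k_d + c_ε x̄ - v < y) and the up-shock branch not defaulting (k_u + c_ε x̄ - v ≥ y). -/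
/-!
Write `D = 1 - (1 - δ) c > 0`, `w̲ = k_d - v`, `w̄ = k_u - v`. The candidate `x̄` is exactly the
solution of the linear equation `x = δ y + (1 - δ) (w̲ + c x)`, i.e. of the clearing equation
once we know that the down branch pays `w̲ + c x̄ ∈ [0, y)` and the up branch pays `y`.
Both branch conditions reduce to the hypotheses through the identity
`(w + c x̄ - y) D = w + c y - y - c (1 - δ) (w - w̲)`:
for `w = w̲` it reads `(w̲ + c x̄ - y) D = w̲ + c y - y`, for `w = w̄` it reads
`(w̄ + c x̄ - y) D = c (y - (1 - δ)(w̄ - w̲)) - (y - w̄)`.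
-/

section Clearing

variable {y δ c wlo whi x : ℝ}

theorem one_sub_mul_pos (hδ : 0 ≤ δ) (hc0 : 0 ≤ c) (hc1 : c < 1) : 0 < 1 - (1 - δ) * c := by
  nlinarith

theorem surplus_mul_eq (hx : x * (1 - (1 - δ) * c) = δ * y + (1 - δ) * wlo) (w : ℝ) :
    (w + c * x - y) * (1 - (1 - δ) * c) = w + c * y - y - c * (1 - δ) * (w - wlo) := by
  linear_combination c * hx

theorem down_shock_defaults (hD : 0 < 1 - (1 - δ) * c)
    (hx : x * (1 - (1 - δ) * c) = δ * y + (1 - δ) * wlo) (h : c * y < y - wlo) :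
    wlo + c * x < y := by
  nlinarith [surplus_mul_eq hx wlo]

/-- When the denominator is nonpositive the hypothesis `hlow` says nothing useful, but then
`y - w̄ ≤ y - (1 - δ)(w̄ - w̲) ≤ 0` and the conclusion holds anyway. -/
theorem sub_le_mul_of_div_lt (hδ0 : 0 ≤ δ) (hδ1 : δ ≤ 1) (hc : c ≤ 1) (hwlo : 0 ≤ wlo)
    (hw : wlo ≤ whi) (hlow : (y - whi) / (y - (1 - δ) * (whi - wlo)) < c) :
    y - whi ≤ c * (y - (1 - δ) * (whi - wlo)) := by
  rcases le_or_gt (y - (1 - δ) * (whi - wlo)) 0 with hd | hd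
  · nlinarith [mul_nonneg hδ0 (hwlo.trans hw), mul_nonneg (sub_nonneg.2 hδ1) hwlo,
      mul_nonpos_of_nonneg_of_nonpos (sub_nonneg.2 hc) hd]
  · exact ((div_lt_iff₀ hd).1 hlow).le

theorem up_shock_solvent (hD : 0 < 1 - (1 - δ) * c)
    (hx : x * (1 - (1 - δ) * c) = δ * y + (1 - δ) * wlo)
    (h : y - whi ≤ c * (y - (1 - δ) * (whi - wlo))) :
    y ≤ whi + c * x := by
  nlinarith [surplus_mul_eq hx whi]

theorem clearing_eq (hx : x * (1 - (1 - δ) * c) = δ * y + (1 - δ) * wlo)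
    (hup : y ≤ whi + c * x) (hdn : wlo + c * x < y) (hpos : 0 ≤ wlo + c * x) :
    x = δ * min (max (whi + c * x) 0) y + (1 - δ) * min (max (wlo + c * x) 0) y := by
  rw [min_eq_right (hup.trans (le_max_left _ _)), max_eq_left hpos, min_eq_left hdn.le]
  linear_combination hx

end Clearing

theorem stmt_4_general (y v ku kd δ c : ℝ) (hy : 0 < y)
    (hk : ku > kd) (hδ : δ ∈ Set.Ioo (0:ℝ) 1)
    (hc : c ∈ Set.Ioo (0:ℝ) 1)
    (hwlo : 0 ≤ kd - v)
    (hlow : (y - (ku - v)) / (y - (1 - δ) * ((ku - v) - (kd - v))) < c)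
    (hhigh : c < (y - (kd - v)) / y) :
    let x := (δ * y + (1 - δ) * (kd - v)) / (1 - (1 - δ) * c)
    x = δ * min (max (ku + c * x - v) 0) y + (1 - δ) * min (max (kd + c * x - v) 0) y ∧
    kd + c * x - v < y ∧ ku + c * x - v ≥ y := by
  obtain ⟨hδ0, hδ1⟩ := hδ
  obtain ⟨hc0, hc1⟩ := hc
  intro x
  have hD := one_sub_mul_pos hδ0.le hc0.le hc1
  have hx : x * (1 - (1 - δ) * c) = δ * y + (1 - δ) * (kd - v) := div_mul_cancel₀ _ hD.ne'
  have hx0 : 0 ≤ x :=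
    div_nonneg (add_nonneg (mul_nonneg hδ0.le hy.le) (mul_nonneg (sub_nonneg.2 hδ1.le) hwlo))
      hD.le
  have hdn := down_shock_defaults hD hx ((lt_div_iff₀ hy).1 hhigh)
  have hup := up_shock_solvent hD hx
    (sub_le_mul_of_div_lt hδ0.le hδ1.le hc1.le hwlo (by linarith) hlow)
  rw [add_sub_right_comm ku, add_sub_right_comm kd]
  exact ⟨clearing_eq hx hup hdn (add_nonneg hwlo (mul_nonneg hc0.le hx0)), hdn, hup⟩

/-- If `(y - w̄)/(y - (1-δ)(w̄ - w̲)) < c_ε < (y - w̲)/y`, where `w̄ = k_u - v` and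
`w̲ = k_d - v ≥ 0`, then `x̄ = (δ y + (1-δ) w̲)/(1 - (1-δ) c_ε)` solves the clearing
fixed point equation, with the down-shock branch defaulting and the up-shock branch not. -/
theorem stmt_4 (y v ku kd δ c : ℝ) (hy : 0 < y) (hv : 0 ≤ v)
    (hk : ku > kd) (hkd : 0 < kd) (hδ : δ ∈ Set.Ioo (0:ℝ) 1)
    (hc : c ∈ Set.Ioo (0:ℝ) 1)
    (hwlo : 0 ≤ kd - v)
    (hlow : (y - (ku - v)) / (y - (1 - δ) * ((ku - v) - (kd - v))) < c)
    (hhigh : c < (y - (kd - v)) / y) :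
    let x := (δ * y + (1 - δ) * (kd - v)) / (1 - (1 - δ) * c)
    x = δ * min (max (ku + c * x - v) 0) y + (1 - δ) * min (max (kd + c * x - v) 0) y ∧
    kd + c * x - v < y ∧ ku + c * x - v ≥ y :=
  stmt_4_general y v ku kd δ c hy hk hδ hc hwlo hlow hhigh
end

section
/- Suppose g : [0,1] → [0,1] satisfies g(ε) > 1/2 for ε ∈ (0, ε*) and g(ε) < 1/2 for ε ∈ (ε*, 1), with ε* ∈ (0,1). Then with h(ε) = ε(1-ε)(2g(ε)-1) and V*(ε) = (ε-ε*)²/(ε(1-ε)), one has V*'(ε)·h(ε) < 0 for all ε ∈ (0,1)\{ε*}, and V*'(ε*)·h(ε*) = 0. -/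
/-- If `g > 1/2` on `(0, ε*)` and `g < 1/2` on `(ε*, 1)`, then with
`h(ε) = ε(1-ε)(2g(ε)-1)` and
`V*'(ε) = 2(ε-ε*)/(ε(1-ε)) + (ε-ε*)²(2ε-1)/(ε²(1-ε)²)`,
one has `V*'(ε) h(ε) < 0` for all `ε ∈ (0,1) \ {ε*}` and `V*'(ε*) h(ε*) = 0`. -/
theorem stmt_18 (εs : ℝ) (hεs : εs ∈ Set.Ioo (0:ℝ) 1)
    (g : ℝ → ℝ) (hg : ∀ ε ∈ Set.Icc (0:ℝ) 1, g ε ∈ Set.Icc (0:ℝ) 1)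
    (hgup : ∀ ε ∈ Set.Ioo (0:ℝ) εs, g ε > 1/2)
    (hgdn : ∀ ε ∈ Set.Ioo εs 1, g ε < 1/2)
    (h V' : ℝ → ℝ)
    (hh : ∀ ε, h ε = ε * (1 - ε) * (2 * g ε - 1))
    (hV' : ∀ ε, V' ε = 2 * (ε - εs) / (ε * (1 - ε)) +
      (ε - εs)^2 * (2 * ε - 1) / (ε^2 * (1 - ε)^2)) :
    (∀ ε ∈ Set.Ioo (0:ℝ) 1, ε ≠ εs → V' ε * h ε < 0) ∧ V' εs * h εs = 0 := by
  obtain ⟨hs0, hs1⟩ := hεs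
  constructor
  · intro ε hε hne
    obtain ⟨he0, he1⟩ := hε
    have h1e : (0:ℝ) < 1 - ε := by linarith
    have hεne : ε ≠ 0 := ne_of_gt he0
    have h1ene : (1:ℝ) - ε ≠ 0 := ne_of_gt h1e
    have key : V' ε * h ε =
        (ε - εs) * (2 * g ε - 1) * ((ε * (1 - εs) + εs * (1 - ε)) / (ε * (1 - ε))) := by
      rw [hV', hh]
      field_simp
      ring
    rw [key]
    have hBpos : (0:ℝ) < (ε * (1 - εs) + εs * (1 - ε)) / (ε * (1 - ε)) := by
      apply div_pos
      · have : 0 < ε * (1 - εs) := mul_pos he0 (by linarith)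
        have : 0 < εs * (1 - ε) := mul_pos hs0 h1e
        nlinarith
      · exact mul_pos he0 h1e
    have hAneg : (ε - εs) * (2 * g ε - 1) < 0 := by
      rcases lt_or_gt_of_ne hne with hlt | hgt
      · have := hgup ε ⟨he0, hlt⟩
        have h1 : ε - εs < 0 := by linarith
        have h2 : 0 < 2 * g ε - 1 := by linarith
        exact mul_neg_of_neg_of_pos h1 h2
      · have := hgdn ε ⟨hgt, he1⟩
        have h1 : 0 < ε - εs := by linarith
        have h2 : 2 * g ε - 1 < 0 := by linarith
        exact mul_neg_of_pos_of_neg h1 h2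
    exact mul_neg_of_neg_of_pos hAneg hBpos
  · rw [hV']
    simp
end
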